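/- arXiv:1511.02923 — 3 statements merged into one kernel-verified Lean document; each statement's English description precedes it below -/
import Mathlib

section
/- With φ the exponent-truncation map on ℤ[x₁,…,x_N] (replacing every exponent ≥ 3 in each monomial by 2), for every i and every polynomial p not involving xᵢ, φ((1 − xᵢ²)(1 − xᵢ²·p)) = 1 − xᵢ². -/
open MvPolynomial

/-- The exponent-truncation map `φ` on `ℤ[x₁,…,x_N]`: in each monomial every
exponent `e ≥ 3` is replaced by `2`, extended additively. -/
noncomputable def phi (N : ℕ) (p : MvPolynomial (Fin N) ℤ) : MvPolynomial (Fin N) ℤ :=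
  (AddMonoidAlgebra.coeff p).sum fun m c => monomial (Finsupp.mapRange (fun e => min e 2) (by simp) m) c

/-!
`φ` is the pushforward of coefficients along the truncation `m ↦ min m 2` of exponent vectors,
so it is `ℤ`-linear. Since `p` does not involve `xᵢ`, truncation sends every monomial of
`xᵢ⁴ p` to the corresponding monomial of `xᵢ² p`, hence `φ (xᵢ⁴ p) = φ (xᵢ² p)`, and these two
terms cancel in `φ (1 - xᵢ² - xᵢ² p + xᵢ⁴ p)`.
-/

section TruncExp

variable {σ : Type*}

noncomputable def truncExp (m : σ →₀ ℕ) : σ →₀ ℕ :=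
  Finsupp.mapRange (fun e => min e 2) (by simp) m

lemma truncExp_eq_self {m : σ →₀ ℕ} (hm : ∀ j, m j ≤ 2) : truncExp m = m := by
  ext j
  simp [truncExp, hm j]

lemma truncExp_single_add {i : σ} {a b : ℕ} (hab : min a 2 = min b 2)
    {m : σ →₀ ℕ} (hm : m i = 0) :
    truncExp (Finsupp.single i a + m) = truncExp (Finsupp.single i b + m) := by
  ext j
  rcases eq_or_ne i j with rfl | hij
  · simpa [truncExp, hm] using hab
  · simp [truncExp, hij]

end TruncExp

lemma phi_eq_mapDomainLinearMap (N : ℕ) :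
    phi N = AddMonoidAlgebra.mapDomainLinearMap ℤ ℤ truncExp := by
  ext p : 1
  rw [phi, ← AddMonoidAlgebra.ofCoeff_coeff (AddMonoidAlgebra.mapDomainLinearMap ℤ ℤ _ p),
    AddMonoidAlgebra.coeff_mapDomainLinearMap, Finsupp.mapDomain,
    AddMonoidAlgebra.ofCoeff_finsuppSum]
  exact Finsupp.sum_congr fun m _ => (single_eq_monomial _ _).symm

lemma phi_monomial {N : ℕ} (m : Fin N →₀ ℕ) (c : ℤ) :
    phi N (monomial m c) = monomial (truncExp m) c := by
  rw [phi_eq_mapDomainLinearMap, ← single_eq_monomial,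
    AddMonoidAlgebra.mapDomainLinearMap_single, single_eq_monomial]

lemma phi_X_pow_mul_eq {N : ℕ} {i : Fin N} {a b : ℕ} (hab : min a 2 = min b 2)
    {p : MvPolynomial (Fin N) ℤ} (hp : ∀ m ∈ p.support, m i = 0) :
    phi N (X i ^ a * p) = phi N (X i ^ b * p) := by
  rw [← p.support_sum_monomial_coeff, Finset.mul_sum, Finset.mul_sum, phi_eq_mapDomainLinearMap,
    map_sum, map_sum]
  refine Finset.sum_congr rfl fun m hm => ?_
  simp only [X_pow_eq_monomial, monomial_mul, one_mul, ← phi_eq_mapDomainLinearMap, phi_monomial,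
    truncExp_single_add hab (hp m hm)]

theorem phi_prop_b {N : ℕ} (i : Fin N) (p : MvPolynomial (Fin N) ℤ)
    (hp : ∀ m ∈ p.support, m i = 0) :
    phi N ((1 - X i ^ 2) * (1 - X i ^ 2 * p)) = 1 - X i ^ 2 := by
  have h_one : phi N 1 = 1 := by
    rw [one_def, phi_monomial, truncExp_eq_self (by simp)]
  have h_sq : phi N (X i ^ 2) = X i ^ 2 := by
    rw [X_pow_eq_monomial, phi_monomial, truncExp_eq_self fun j => ?_]
    rcases eq_or_ne i j with rfl | hij <;> simp [*]
  have h_quartic : phi N (X i ^ 4 * p) = phi N (X i ^ 2 * p) := phi_X_pow_mul_eq (by norm_num) hp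
  have h_expand : (1 - X i ^ 2) * (1 - X i ^ 2 * p) = 1 - X i ^ 2 - X i ^ 2 * p + X i ^ 4 * p := by
    ring
  rw [h_expand, phi_eq_mapDomainLinearMap, map_add, map_sub, map_sub, ← phi_eq_mapDomainLinearMap,
    h_one, h_sq, h_quartic]
  ring
end

section
/- Let A be a block matrix equation P·(V ⊕ 0_k) = D·Q where P, Q are square matrices of unit determinant, V is an invertible n×n matrix, D = D' ⊕ 0_k with D' an invertible n×n diagonal matrix, and 0_k the k×k zero matrix. Writing P and Q in corresponding blocks P = [[P₁,P₃],[P₂,P₄]], Q = [[Q₁,Q₂],[Q₃,Q₄]], one has P₂V = 0, D'Q₂ = 0, P₁V = D'Q₁, hence P₂ = 0, Q₂ = 0, det(P₁) and det(Q₁) are units, and therefore D' is a diagonal form of V (i.e., P₁VQ₁' = D' for suitable unit-determinant matrices). -/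
open Matrix

namespace Matrix

section Cancel

variable {l m n R : Type*} [Fintype m] [DecidableEq m] [CommRing R] [NoZeroDivisors R]

theorem eq_zero_of_mul_eq_zero_of_det_ne_zero {A : Matrix l m R} {V : Matrix m m R}
    (hV : V.det ≠ 0) (h : A * V = 0) : A = 0 :=
  ext fun i j => congrFun (eq_zero_of_vecMul_eq_zero hV (congrFun h i)) j

theorem eq_zero_of_det_ne_zero_of_mul_eq_zero {V : Matrix m m R} {A : Matrix m n R}
    (hV : V.det ≠ 0) (h : V * A = 0) : A = 0 := by
  have hVt : Vᵀ.det ≠ 0 := by rwa [det_transpose]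
  have hAt : Aᵀ * Vᵀ = 0 := by rw [← transpose_mul, h, transpose_zero]
  simpa using congrArg transpose (eq_zero_of_mul_eq_zero_of_det_ne_zero hVt hAt)

end Cancel

section BlockTriangular

variable {m n R : Type*} [Fintype m] [Fintype n] [DecidableEq m] [DecidableEq n] [CommRing R]

theorem isUnit_det_of_isUnit_det_fromBlocks_zero₂₁ {A : Matrix m m R} {B : Matrix m n R}
    {D : Matrix n n R} (h : IsUnit (fromBlocks A B 0 D).det) : IsUnit A.det :=
  isUnit_of_mul_isUnit_left (det_fromBlocks_zero₂₁ A B D ▸ h)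

theorem isUnit_det_of_isUnit_det_fromBlocks_zero₁₂ {A : Matrix m m R} {C : Matrix n m R}
    {D : Matrix n n R} (h : IsUnit (fromBlocks A 0 C D).det) : IsUnit A.det :=
  isUnit_of_mul_isUnit_left (det_fromBlocks_zero₁₂ A C D ▸ h)

end BlockTriangular

end Matrix

/-- Block matrix analysis: from `P · (V ⊕ 0) = (D' ⊕ 0) · Q` with `P, Q` of unit
determinant, `V` and the diagonal `D'` invertible, one deduces the block identities
and that `D'` is a diagonal form of `V`. -/
theorem block_diagonal_form {R : Type*} [CommRing R] [IsDomain R] {n k : ℕ}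
    (V : Matrix (Fin n) (Fin n) R) (hV : V.det ≠ 0)
    (dvec : Fin n → R) (hD : (Matrix.diagonal dvec).det ≠ 0)
    (P₁ : Matrix (Fin n) (Fin n) R) (P₃ : Matrix (Fin n) (Fin k) R)
    (P₂ : Matrix (Fin k) (Fin n) R) (P₄ : Matrix (Fin k) (Fin k) R)
    (Q₁ : Matrix (Fin n) (Fin n) R) (Q₂ : Matrix (Fin n) (Fin k) R)
    (Q₃ : Matrix (Fin k) (Fin n) R) (Q₄ : Matrix (Fin k) (Fin k) R)
    (hP : IsUnit (fromBlocks P₁ P₃ P₂ P₄).det)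
    (hQ : IsUnit (fromBlocks Q₁ Q₂ Q₃ Q₄).det)
    (heq : fromBlocks P₁ P₃ P₂ P₄ * fromBlocks V 0 0 (0 : Matrix (Fin k) (Fin k) R) =
      fromBlocks (Matrix.diagonal dvec) 0 0 (0 : Matrix (Fin k) (Fin k) R) *
        fromBlocks Q₁ Q₂ Q₃ Q₄) :
    P₂ * V = 0 ∧ Matrix.diagonal dvec * Q₂ = 0 ∧
      P₁ * V = Matrix.diagonal dvec * Q₁ ∧
      P₂ = 0 ∧ Q₂ = 0 ∧ IsUnit P₁.det ∧ IsUnit Q₁.det ∧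
      ∃ P' Q' : Matrix (Fin n) (Fin n) R, IsUnit P'.det ∧ IsUnit Q'.det ∧
        P' * V * Q' = Matrix.diagonal dvec := by
  simp only [fromBlocks_multiply, Matrix.mul_zero, Matrix.zero_mul, add_zero,
    fromBlocks_inj] at heq
  obtain ⟨h₁₁, h₁₂, h₂₁, -⟩ := heq
  have hP₂ : P₂ = 0 := eq_zero_of_mul_eq_zero_of_det_ne_zero hV h₂₁
  have hQ₂ : Q₂ = 0 := eq_zero_of_det_ne_zero_of_mul_eq_zero hD h₁₂.symm
  have hP₁ : IsUnit P₁.det := isUnit_det_of_isUnit_det_fromBlocks_zero₂₁ (hP₂ ▸ hP)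
  have hQ₁ : IsUnit Q₁.det := isUnit_det_of_isUnit_det_fromBlocks_zero₁₂ (hQ₂ ▸ hQ)
  refine ⟨h₂₁, h₁₂.symm, h₁₁, hP₂, hQ₂, hP₁, hQ₁, P₁, Q₁⁻¹, hP₁,
    isUnit_nonsing_inv_det Q₁ hQ₁, ?_⟩
  rw [h₁₁, mul_nonsing_inv_cancel_right _ _ hQ₁]
end

section
/- The determinant of the Varchenko matrix of the arrangement of d+1 pseudospheres through a common point (minimal non-semigeneral case) equals (1−x₁²)^{2^d−2}·(1−x₂²)^{2^d−2}⋯(1−x_{d+1}²)^{2^d−2}·(1−x₁²x₂²⋯x_{d+1}²). -/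
/-!
The antipodal map of `S²` pairs the six regions as `R ↔ -R`, and `-R'` is separated from `R` by
exactly the pseudocircles that do not separate `R'` from `R`. Ordering the regions as three
regions followed by their antipodes, the Varchenko matrix becomes `[[P, Q], [Q, P]]`, whose
determinant is `det (P + Q) * det (P - Q)`. Both `3 × 3` determinants factor, and `P - Q` is
`P + Q` with `x₃` replaced by `-x₃`, which turns the factor `1 - x₁x₂x₃` into `1 + x₁x₂x₃`.
-/

open MvPolynomial

noncomputable def x1 : MvPolynomial (Fin 3) ℤ := X 0
noncomputable def x2 : MvPolynomial (Fin 3) ℤ := X 1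
noncomputable def x3 : MvPolynomial (Fin 3) ℤ := X 2

/-- The Varchenko matrix of three pseudocircles in `S²` through a common point
(the minimal non-semigeneral case, `d = 2`): the six regions have sign vectors
`(+,+,+), (−,+,+), (−,−,+), (−,−,−), (+,−,−), (+,+,−)`. -/
noncomputable def V6 : Matrix (Fin 6) (Fin 6) (MvPolynomial (Fin 3) ℤ) :=
  Matrix.of
    ![![1, x1, x1*x2, x1*x2*x3, x2*x3, x3],
      ![x1, 1, x2, x2*x3, x1*x2*x3, x1*x3],
      ![x1*x2, x2, 1, x3, x1*x3, x1*x2*x3],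
      ![x1*x2*x3, x2*x3, x3, 1, x1, x1*x2],
      ![x2*x3, x1*x2*x3, x1*x3, x1, 1, x2],
      ![x3, x1*x3, x1*x2*x3, x1*x2, x2, 1]]

namespace Matrix

variable {n R : Type*} [Fintype n] [DecidableEq n] [CommRing R]

theorem det_fromBlocks_eq_det_add_mul_det_sub (A B : Matrix n n R) :
    (fromBlocks A B B A).det = (A + B).det * (A - B).det := by
  have hL : (fromBlocks 1 0 (-1) 1 : Matrix (n ⊕ n) (n ⊕ n) R).det = 1 := by simp
  have hR : (fromBlocks 1 0 1 1 : Matrix (n ⊕ n) (n ⊕ n) R).det = 1 := by simp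
  have hconj : fromBlocks 1 0 (-1) 1 * fromBlocks A B B A * fromBlocks 1 0 1 1 =
      fromBlocks (A + B) B 0 (A - B) := by
    simp only [fromBlocks_multiply, Matrix.one_mul, Matrix.mul_one, Matrix.zero_mul,
      Matrix.mul_zero, Matrix.neg_mul, add_zero, zero_add]
    congr 1 <;> abel
  calc (fromBlocks A B B A).det
      = (fromBlocks 1 0 (-1) 1 * fromBlocks A B B A * fromBlocks 1 0 1 1).det := by
        rw [det_mul, det_mul, hL, hR, one_mul, mul_one]
    _ = (A + B).det * (A - B).det := by rw [hconj, det_fromBlocks_zero₂₁]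

end Matrix

namespace ThreePseudocircles

open Matrix

variable {R : Type*} [CommRing R] (a b c : R)

/-- The Varchenko matrix of the regions `(+,+,+), (−,+,+), (−,−,+)`, with weights `a, b` on the
first two pseudocircles. -/
def nearBlock : Matrix (Fin 3) (Fin 3) R :=
  !![1, a, a * b; a, 1, b; a * b, b, 1]

/-- The entries between the regions of `nearBlock` and their antipodes `(−,−,−), (+,−,−), (+,+,−)`,
with weight `c` on the third pseudocircle. -/
def farBlock : Matrix (Fin 3) (Fin 3) R :=
  !![a * b * c, b * c, c; b * c, a * b * c, a * c; c, a * c, a * b * c]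

theorem farBlock_neg : farBlock a b (-c) = -farBlock a b c := by
  ext i j
  fin_cases i <;> fin_cases j <;> simp [farBlock]

theorem det_nearBlock_add_farBlock :
    (nearBlock a b + farBlock a b c).det =
      (1 - a ^ 2) * (1 - b ^ 2) * (1 - c ^ 2) * (1 - a * b * c) := by
  rw [det_fin_three]
  simp only [nearBlock, farBlock, Matrix.add_apply, of_apply, cons_val', cons_val_zero,
    cons_val_fin_one, cons_val_one, cons_val]
  ring

theorem det_nearBlock_sub_farBlock :
    (nearBlock a b - farBlock a b c).det =
      (1 - a ^ 2) * (1 - b ^ 2) * (1 - c ^ 2) * (1 + a * b * c) := by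
  rw [sub_eq_add_neg, ← farBlock_neg, det_nearBlock_add_farBlock]
  ring

end ThreePseudocircles

open ThreePseudocircles in
theorem V6_submatrix_finSumFinEquiv :
    V6.submatrix finSumFinEquiv finSumFinEquiv =
      Matrix.fromBlocks (nearBlock x1 x2) (farBlock x1 x2 x3) (farBlock x1 x2 x3)
        (nearBlock x1 x2) := by
  ext (i | i) (j | j) <;> fin_cases i <;> fin_cases j <;> rfl

open ThreePseudocircles in
theorem det_V6 :
    V6.det = (1 - x1^2)^2 * (1 - x2^2)^2 * (1 - x3^2)^2 *
      (1 - x1^2 * x2^2 * x3^2) := by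
  rw [← Matrix.det_submatrix_equiv_self (finSumFinEquiv : Fin 3 ⊕ Fin 3 ≃ Fin 6),
    V6_submatrix_finSumFinEquiv,
    Matrix.det_fromBlocks_eq_det_add_mul_det_sub, det_nearBlock_add_farBlock,
    det_nearBlock_sub_farBlock]
  ring
end
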